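/- arXiv:2408.11370 — 2 statements merged into one kernel-verified Lean document; each statement's English description precedes it below -/
import Mathlib

section
/- Let H, H' ∈ ℝ^{n×d} with rows h_i, h'_i and D, D' ∈ ℝ^{m×d} with rows d_j, d'_j, and let θ > 0. Define MMD²(H, D) = (1/n²)∑_{i,i'} k(h_i, h_{i'}) + (1/m²)∑_{j,j'} k(d_j, d_{j'}) − (2/(mn))∑_{i,j} k(h_i, d_j), where k(x, y) = exp(−θ‖x − y‖²₂). Then |MMD²(H, D) − MMD²(H', D')| ≤ 4√θ (n^{−1/2}‖H − H'‖_F + m^{−1/2}‖D − D'‖_F). -/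
/-- Frobenius norm of a real matrix. -/
noncomputable def frobNorm {m n : Type*} [Fintype m] [Fintype n]
    (A : Matrix m n ℝ) : ℝ :=
  Real.sqrt (∑ i, ∑ j, (A i j) ^ 2)

/-- Gaussian kernel with parameter `θ`. -/
noncomputable def gaussK {d : ℕ} (θ : ℝ) (x y : Fin d → ℝ) : ℝ :=
  Real.exp (-θ * ∑ t, (x t - y t) ^ 2)

/-- Biased squared MMD between the rows of `H` and the rows of `D`
with the Gaussian kernel. -/
noncomputable def mmd2 {n m d : ℕ} (θ : ℝ)
    (H : Matrix (Fin n) (Fin d) ℝ) (D : Matrix (Fin m) (Fin d) ℝ) : ℝ :=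
  (1 / (n : ℝ) ^ 2) * ∑ i, ∑ i', gaussK θ (H i) (H i')
    + (1 / (m : ℝ) ^ 2) * ∑ j, ∑ j', gaussK θ (D j) (D j')
    - (2 / ((m : ℝ) * n)) * ∑ i, ∑ j, gaussK θ (H i) (D j)

/-- `exp (-x^2)` is `1`-Lipschitz. -/
lemma exp_neg_sq_lip (a b : ℝ) :
    |Real.exp (-a^2) - Real.exp (-b^2)| ≤ |a - b| := by
  have key : ∀ x : ℝ, HasDerivAt (fun t : ℝ => Real.exp (-t^2))
      (Real.exp (-x^2) * (-(2*x))) x := by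
    intro x
    have h1 : HasDerivAt (fun t : ℝ => -t^2) (-(2*x)) x := by
      have h := (hasDerivAt_pow 2 x).neg
      norm_num at h
      exact h
    exact h1.exp
  have bound : ∀ x : ℝ, ‖Real.exp (-x^2) * (-(2*x))‖ ≤ 1 := by
    intro x
    have h2 : 2 * |x| ≤ Real.exp (x^2) := by
      have := Real.add_one_le_exp (x^2)
      nlinarith [sq_abs x, sq_nonneg (|x| - 1)]
    have h3 : Real.exp (-x^2) * (2 * |x|) ≤ Real.exp (-x^2) * Real.exp (x^2) :=
      mul_le_mul_of_nonneg_left h2 (Real.exp_pos _).le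
    rw [← Real.exp_add, neg_add_cancel, Real.exp_zero] at h3
    calc ‖Real.exp (-x^2) * (-(2*x))‖ = Real.exp (-x^2) * (2 * |x|) := by
          rw [norm_mul, Real.norm_eq_abs, abs_of_pos (Real.exp_pos _),
            Real.norm_eq_abs, abs_neg, abs_mul, abs_two]
      _ ≤ 1 := h3
  have := Convex.norm_image_sub_le_of_norm_hasDerivWithin_le
    (f := fun t : ℝ => Real.exp (-t^2)) (s := Set.univ) (C := 1)
    (fun x _ => (key x).hasDerivWithinAt) (fun x _ => bound x)
    convex_univ (Set.mem_univ b) (Set.mem_univ a)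
  simpa using this

/-- Euclidean norm of a plain pi-type vector. -/
noncomputable def enorm {d : ℕ} (v : Fin d → ℝ) : ℝ := Real.sqrt (∑ t, v t ^ 2)

lemma enorm_eq {d : ℕ} (v : Fin d → ℝ) :
    _root_.enorm v = ‖(WithLp.equiv 2 (Fin d → ℝ)).symm v‖ := by
  rw [EuclideanSpace.norm_eq]
  simp [_root_.enorm, Real.norm_eq_abs, sq_abs]

lemma enorm_nonneg {d : ℕ} (v : Fin d → ℝ) : 0 ≤ _root_.enorm v := Real.sqrt_nonneg _

lemma enorm_triangle {d : ℕ} (x y x' y' : Fin d → ℝ) :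
    |_root_.enorm (x - y) - _root_.enorm (x' - y')| ≤ _root_.enorm (x - x') + _root_.enorm (y - y') := by
  simp only [enorm_eq]
  have h1 : (WithLp.equiv 2 (Fin d → ℝ)).symm (x - y) =
      (WithLp.equiv 2 (Fin d → ℝ)).symm x - (WithLp.equiv 2 (Fin d → ℝ)).symm y := rfl
  have h2 : (WithLp.equiv 2 (Fin d → ℝ)).symm (x' - y') =
      (WithLp.equiv 2 (Fin d → ℝ)).symm x' - (WithLp.equiv 2 (Fin d → ℝ)).symm y' := rfl
  have h3 : (WithLp.equiv 2 (Fin d → ℝ)).symm (x - x') =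
      (WithLp.equiv 2 (Fin d → ℝ)).symm x - (WithLp.equiv 2 (Fin d → ℝ)).symm x' := rfl
  have h4 : (WithLp.equiv 2 (Fin d → ℝ)).symm (y - y') =
      (WithLp.equiv 2 (Fin d → ℝ)).symm y - (WithLp.equiv 2 (Fin d → ℝ)).symm y' := rfl
  rw [h1, h2, h3, h4]
  set X := (WithLp.equiv 2 (Fin d → ℝ)).symm x
  set Y := (WithLp.equiv 2 (Fin d → ℝ)).symm y
  set X' := (WithLp.equiv 2 (Fin d → ℝ)).symm x'
  set Y' := (WithLp.equiv 2 (Fin d → ℝ)).symm y'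
  calc |‖X - Y‖ - ‖X' - Y'‖| ≤ ‖(X - Y) - (X' - Y')‖ := abs_norm_sub_norm_le _ _
    _ = ‖(X - X') - (Y - Y')‖ := by rw [sub_sub_sub_comm]
    _ ≤ ‖X - X'‖ + ‖Y - Y'‖ := norm_sub_le _ _

/-- The Gaussian kernel is `√θ`-Lipschitz in each argument. -/
lemma gaussK_lip {d : ℕ} {θ : ℝ} (hθ : 0 < θ) (x y x' y' : Fin d → ℝ) :
    |gaussK θ x y - gaussK θ x' y'| ≤
      Real.sqrt θ * (_root_.enorm (x - x') + _root_.enorm (y - y')) := by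
  have hrw : ∀ u v : Fin d → ℝ,
      gaussK θ u v = Real.exp (-(Real.sqrt θ * _root_.enorm (u - v))^2) := by
    intro u v
    have he : _root_.enorm (u - v) ^ 2 = ∑ t, (u t - v t) ^ 2 := by
      rw [_root_.enorm, Real.sq_sqrt (Finset.sum_nonneg fun _ _ => sq_nonneg _)]
      simp [Pi.sub_apply]
    rw [gaussK]
    congr 1
    rw [mul_pow, Real.sq_sqrt hθ.le, he]
    ring
  rw [hrw, hrw]
  calc |Real.exp (-(Real.sqrt θ * _root_.enorm (x - y))^2) -
        Real.exp (-(Real.sqrt θ * _root_.enorm (x' - y'))^2)|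
      ≤ |Real.sqrt θ * _root_.enorm (x - y) - Real.sqrt θ * _root_.enorm (x' - y')| :=
        exp_neg_sq_lip _ _
    _ = Real.sqrt θ * |_root_.enorm (x - y) - _root_.enorm (x' - y')| := by
        rw [← mul_sub, abs_mul, abs_of_nonneg (Real.sqrt_nonneg _)]
    _ ≤ Real.sqrt θ * (_root_.enorm (x - x') + _root_.enorm (y - y')) :=
        mul_le_mul_of_nonneg_left (enorm_triangle x y x' y') (Real.sqrt_nonneg _)

/-- Cauchy–Schwarz: sum of row norms vs Frobenius norm. -/
lemma sum_enorm_le {n d : ℕ} (A : Matrix (Fin n) (Fin d) ℝ) :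
    ∑ i, _root_.enorm (A i) ≤ Real.sqrt n * frobNorm A := by
  have hS : (0:ℝ) ≤ ∑ i, _root_.enorm (A i) := Finset.sum_nonneg fun _ _ => enorm_nonneg _
  have hsq : (∑ i, _root_.enorm (A i)) ^ 2 ≤ (n : ℝ) * ∑ i, ∑ j, (A i j) ^ 2 := by
    calc (∑ i, _root_.enorm (A i)) ^ 2 ≤ (Finset.univ.card : ℝ) * ∑ i, _root_.enorm (A i) ^ 2 :=
          sq_sum_le_card_mul_sum_sq
      _ = (n : ℝ) * ∑ i, ∑ j, (A i j) ^ 2 := by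
          rw [Finset.card_univ, Fintype.card_fin]
          congr 1
          refine Finset.sum_congr rfl fun i _ => ?_
          rw [_root_.enorm, Real.sq_sqrt (Finset.sum_nonneg fun _ _ => sq_nonneg _)]
  calc ∑ i, _root_.enorm (A i) = Real.sqrt ((∑ i, _root_.enorm (A i)) ^ 2) := (Real.sqrt_sq hS).symm
    _ ≤ Real.sqrt ((n : ℝ) * ∑ i, ∑ j, (A i j) ^ 2) := Real.sqrt_le_sqrt hsq
    _ = Real.sqrt n * frobNorm A := by
        rw [Real.sqrt_mul (Nat.cast_nonneg n), frobNorm]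

theorem stmt8 {n m d : ℕ} (hn : 0 < n) (hm : 0 < m) (θ : ℝ) (hθ : 0 < θ)
    (H H' : Matrix (Fin n) (Fin d) ℝ) (D D' : Matrix (Fin m) (Fin d) ℝ) :
    |mmd2 θ H D - mmd2 θ H' D'| ≤
      4 * Real.sqrt θ *
        ((1 / Real.sqrt n) * frobNorm (H - H')
          + (1 / Real.sqrt m) * frobNorm (D - D')) := by
  set a : Fin n → ℝ := fun i => _root_.enorm (H i - H' i) with ha
  set b : Fin m → ℝ := fun j => _root_.enorm (D j - D' j) with hb
  set Sa := ∑ i, a i with hSa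
  set Sb := ∑ j, b j with hSb
  have haH : ∀ i, H i - H' i = (H - H') i := fun i => rfl
  have hbD : ∀ j, D j - D' j = (D - D') j := fun j => rfl
  have hSa_nonneg : 0 ≤ Sa := Finset.sum_nonneg fun _ _ => enorm_nonneg _
  have hSb_nonneg : 0 ≤ Sb := Finset.sum_nonneg fun _ _ => enorm_nonneg _
  have hst : (0:ℝ) ≤ Real.sqrt θ := Real.sqrt_nonneg _
  -- bound on the first double sum
  have h1 : |(∑ i, ∑ i', gaussK θ (H i) (H i')) -
      (∑ i, ∑ i', gaussK θ (H' i) (H' i'))| ≤ Real.sqrt θ * (2 * n * Sa) := by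
    rw [← Finset.sum_sub_distrib]
    simp_rw [← Finset.sum_sub_distrib]
    calc |∑ i, ∑ i', (gaussK θ (H i) (H i') - gaussK θ (H' i) (H' i'))|
        ≤ ∑ i, |∑ i', (gaussK θ (H i) (H i') - gaussK θ (H' i) (H' i'))| :=
          Finset.abs_sum_le_sum_abs _ _
      _ ≤ ∑ i, ∑ i', |gaussK θ (H i) (H i') - gaussK θ (H' i) (H' i')| :=
          Finset.sum_le_sum fun i _ => Finset.abs_sum_le_sum_abs _ _
      _ ≤ ∑ i, ∑ i', Real.sqrt θ * (a i + a i') :=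
          Finset.sum_le_sum fun i _ => Finset.sum_le_sum fun i' _ =>
            gaussK_lip hθ _ _ _ _
      _ = Real.sqrt θ * (2 * n * Sa) := by
          rw [hSa]
          simp only [mul_add, Finset.sum_add_distrib, ← Finset.mul_sum,
            Finset.sum_const, Finset.card_univ, Fintype.card_fin, nsmul_eq_mul]
          try ring
  -- bound on the second double sum
  have h2 : |(∑ j, ∑ j', gaussK θ (D j) (D j')) -
      (∑ j, ∑ j', gaussK θ (D' j) (D' j'))| ≤ Real.sqrt θ * (2 * m * Sb) := by
    rw [← Finset.sum_sub_distrib]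
    simp_rw [← Finset.sum_sub_distrib]
    calc |∑ j, ∑ j', (gaussK θ (D j) (D j') - gaussK θ (D' j) (D' j'))|
        ≤ ∑ j, |∑ j', (gaussK θ (D j) (D j') - gaussK θ (D' j) (D' j'))| :=
          Finset.abs_sum_le_sum_abs _ _
      _ ≤ ∑ j, ∑ j', |gaussK θ (D j) (D j') - gaussK θ (D' j) (D' j')| :=
          Finset.sum_le_sum fun j _ => Finset.abs_sum_le_sum_abs _ _
      _ ≤ ∑ j, ∑ j', Real.sqrt θ * (b j + b j') :=
          Finset.sum_le_sum fun j _ => Finset.sum_le_sum fun j' _ =>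
            gaussK_lip hθ _ _ _ _
      _ = Real.sqrt θ * (2 * m * Sb) := by
          rw [hSb]
          simp only [mul_add, Finset.sum_add_distrib, ← Finset.mul_sum,
            Finset.sum_const, Finset.card_univ, Fintype.card_fin, nsmul_eq_mul]
          try ring
  -- bound on the cross double sum
  have h3 : |(∑ i, ∑ j, gaussK θ (H i) (D j)) -
      (∑ i, ∑ j, gaussK θ (H' i) (D' j))| ≤ Real.sqrt θ * (m * Sa + n * Sb) := by
    rw [← Finset.sum_sub_distrib]
    simp_rw [← Finset.sum_sub_distrib]
    calc |∑ i, ∑ j, (gaussK θ (H i) (D j) - gaussK θ (H' i) (D' j))|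
        ≤ ∑ i, |∑ j, (gaussK θ (H i) (D j) - gaussK θ (H' i) (D' j))| :=
          Finset.abs_sum_le_sum_abs _ _
      _ ≤ ∑ i, ∑ j, |gaussK θ (H i) (D j) - gaussK θ (H' i) (D' j)| :=
          Finset.sum_le_sum fun i _ => Finset.abs_sum_le_sum_abs _ _
      _ ≤ ∑ i, ∑ j, Real.sqrt θ * (a i + b j) :=
          Finset.sum_le_sum fun i _ => Finset.sum_le_sum fun j _ =>
            gaussK_lip hθ _ _ _ _
      _ = Real.sqrt θ * (m * Sa + n * Sb) := by
          rw [hSa, hSb]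
          simp only [mul_add, Finset.sum_add_distrib, ← Finset.mul_sum,
            Finset.sum_const, Finset.card_univ, Fintype.card_fin, nsmul_eq_mul]
          try ring
  -- decomposition of the difference
  have hdecomp : mmd2 θ H D - mmd2 θ H' D' =
      (1 / (n : ℝ) ^ 2) * ((∑ i, ∑ i', gaussK θ (H i) (H i')) -
        (∑ i, ∑ i', gaussK θ (H' i) (H' i')))
      + (1 / (m : ℝ) ^ 2) * ((∑ j, ∑ j', gaussK θ (D j) (D j')) -
        (∑ j, ∑ j', gaussK θ (D' j) (D' j')))
      - (2 / ((m : ℝ) * n)) * ((∑ i, ∑ j, gaussK θ (H i) (D j)) -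
        (∑ i, ∑ j, gaussK θ (H' i) (D' j))) := by
    simp only [mmd2]; ring
  have hn' : (0:ℝ) < n := Nat.cast_pos.mpr hn
  have hm' : (0:ℝ) < m := Nat.cast_pos.mpr hm
  have hc1 : (0:ℝ) ≤ 1 / (n : ℝ) ^ 2 := by positivity
  have hc2 : (0:ℝ) ≤ 1 / (m : ℝ) ^ 2 := by positivity
  have hc3 : (0:ℝ) ≤ 2 / ((m : ℝ) * n) := by positivity
  -- triangle inequality
  have htri : |mmd2 θ H D - mmd2 θ H' D'| ≤
      (1 / (n : ℝ) ^ 2) * (Real.sqrt θ * (2 * n * Sa))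
      + (1 / (m : ℝ) ^ 2) * (Real.sqrt θ * (2 * m * Sb))
      + (2 / ((m : ℝ) * n)) * (Real.sqrt θ * (m * Sa + n * Sb)) := by
    rw [hdecomp]
    refine (abs_sub _ _).trans ?_
    refine add_le_add ((abs_add_le _ _).trans (add_le_add ?_ ?_)) ?_
    · rw [abs_mul, abs_of_nonneg hc1]
      exact mul_le_mul_of_nonneg_left h1 hc1
    · rw [abs_mul, abs_of_nonneg hc2]
      exact mul_le_mul_of_nonneg_left h2 hc2
    · rw [abs_mul, abs_of_nonneg hc3]
      exact mul_le_mul_of_nonneg_left h3 hc3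
  have hmid : (1 / (n : ℝ) ^ 2) * (Real.sqrt θ * (2 * n * Sa))
      + (1 / (m : ℝ) ^ 2) * (Real.sqrt θ * (2 * m * Sb))
      + (2 / ((m : ℝ) * n)) * (Real.sqrt θ * (m * Sa + n * Sb))
      = 4 * Real.sqrt θ * ((1 / n) * Sa + (1 / m) * Sb) := by
    field_simp
    ring
  -- Cauchy–Schwarz step
  have hCSa : Sa ≤ Real.sqrt n * frobNorm (H - H') := by
    rw [hSa, ha]
    simp_rw [haH]
    exact sum_enorm_le (H - H')
  have hCSb : Sb ≤ Real.sqrt m * frobNorm (D - D') := by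
    rw [hSb, hb]
    simp_rw [hbD]
    exact sum_enorm_le (D - D')
  have hsn : (0:ℝ) < Real.sqrt n := Real.sqrt_pos.mpr hn'
  have hsm : (0:ℝ) < Real.sqrt m := Real.sqrt_pos.mpr hm'
  have hfin : (1 / (n:ℝ)) * Sa + (1 / (m:ℝ)) * Sb ≤
      (1 / Real.sqrt n) * frobNorm (H - H') + (1 / Real.sqrt m) * frobNorm (D - D') := by
    have e1 : (1 / (n:ℝ)) * (Real.sqrt n * frobNorm (H - H'))
        = (1 / Real.sqrt n) * frobNorm (H - H') := by
      field_simp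
      linear_combination frobNorm (H - H') * Real.mul_self_sqrt hn'.le
    have e2 : (1 / (m:ℝ)) * (Real.sqrt m * frobNorm (D - D'))
        = (1 / Real.sqrt m) * frobNorm (D - D') := by
      field_simp
      linear_combination frobNorm (D - D') * Real.mul_self_sqrt hm'.le
    calc (1 / (n:ℝ)) * Sa + (1 / (m:ℝ)) * Sb
        ≤ (1 / (n:ℝ)) * (Real.sqrt n * frobNorm (H - H'))
          + (1 / (m:ℝ)) * (Real.sqrt m * frobNorm (D - D')) :=
          add_le_add (mul_le_mul_of_nonneg_left hCSa (by positivity))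
            (mul_le_mul_of_nonneg_left hCSb (by positivity))
      _ = _ := by rw [e1, e2]
  calc |mmd2 θ H D - mmd2 θ H' D'|
      ≤ 4 * Real.sqrt θ * ((1 / n) * Sa + (1 / m) * Sb) := by rw [← hmid]; exact htri
    _ ≤ 4 * Real.sqrt θ *
        ((1 / Real.sqrt n) * frobNorm (H - H') + (1 / Real.sqrt m) * frobNorm (D - D')) :=
        mul_le_mul_of_nonneg_left hfin (by positivity)
end

section
/- Let F₁, …, F_k be classes of functions between normed spaces where every function in F_i is κ_i-Lipschitz, and suppose each F_i admits an ε_i-cover (with respect to the evaluation pseudometric) of log-cardinality at most g_i. Then the composition class F_k ∘ ⋯ ∘ F₁ admits an ε-cover with ε = ∑_{i=1}^k ε_i ∏_{j=i+1}^k κ_j whose log-cardinality is at most ∑_{i=1}^k g_i. -/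
open scoped NNReal

/-- The class of compositions `f_k ∘ ⋯ ∘ f_1` with `f_i ∈ F i`. -/
def compClass {V : ℕ → Type*} (F : ∀ i, Set (V i → V (i + 1))) :
    (k : ℕ) → Set (V 0 → V k)
  | 0 => {id}
  | k + 1 => {h | ∃ g ∈ compClass F k, ∃ f ∈ F k, h = f ∘ g}

theorem stmt14 {V : ℕ → Type*} [∀ i, NormedAddCommGroup (V i)]
    (k : ℕ) (F : ∀ i, Set (V i → V (i + 1)))
    (κ : ℕ → ℝ≥0) (ε : ℕ → ℝ) (g : ℕ → ℝ)
    (hLip : ∀ i, ∀ f ∈ F i, LipschitzWith (κ i) f)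
    (hcover : ∀ i < k, ∀ z : V i, ∃ C : Finset (V i → V (i + 1)),
      ↑C ⊆ F i ∧ Real.log C.card ≤ g i ∧
        ∀ f ∈ F i, ∃ f' ∈ C, ‖f z - f' z‖ ≤ ε i)
    (x₀ : V 0) :
    ∃ C : Finset (V 0 → V k), ↑C ⊆ compClass F k ∧
      Real.log C.card ≤ ∑ i ∈ Finset.range k, g i ∧
      ∀ h ∈ compClass F k, ∃ h' ∈ C,
        ‖h x₀ - h' x₀‖ ≤
          ∑ i ∈ Finset.range k, ε i * ∏ j ∈ Finset.Ico (i + 1) k, (κ j : ℝ) := by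
  classical
  induction k with
  | zero =>
    refine ⟨{id}, ?_, by simp, ?_⟩
    · intro f hf
      simp only [Finset.coe_singleton, Set.mem_singleton_iff] at hf
      simp [hf, compClass]
    · intro h hh
      have : h = id := by simpa [compClass] using hh
      exact ⟨id, Finset.mem_singleton_self _, by simp [this]⟩
  | succ k ih =>
    obtain ⟨C, hCsub, hClog, hCcov⟩ :=
      ih (fun i hi z => hcover i (hi.trans (Nat.lt_succ_self k)) z)
    -- nonnegativity of g i for i < k+1
    have hg : ∀ i < k + 1, 0 ≤ g i := by
      intro i hi
      obtain ⟨D, _, hD, _⟩ := hcover i hi 0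
      refine le_trans ?_ hD
      rcases Nat.eq_zero_or_pos D.card with h0 | h1
      · simp [h0]
      · exact Real.log_nonneg (by exact_mod_cast h1)
    have key := fun (g' : V 0 → V k) => hcover k (Nat.lt_succ_self k) (g' x₀)
    choose D hD1 hD2 hD3 using key
    set C' : Finset (V 0 → V (k + 1)) :=
      C.biUnion (fun g' => (D g').image (fun f => f ∘ g')) with hC'
    have hcard : (C'.card : ℝ) ≤ (C.card : ℝ) * Real.exp (g k) := by
      have h1 : C'.card ≤ ∑ g' ∈ C, ((D g').image (fun f => f ∘ g')).card :=
        Finset.card_biUnion_le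
      have h2 : (C'.card : ℝ) ≤ ∑ g' ∈ C, ((D g').card : ℝ) := by
        calc (C'.card : ℝ) ≤ (∑ g' ∈ C, ((D g').image (fun f => f ∘ g')).card : ℕ) := by
              exact_mod_cast h1
          _ = ∑ g' ∈ C, (((D g').image (fun f => f ∘ g')).card : ℝ) := by push_cast; ring
          _ ≤ ∑ g' ∈ C, ((D g').card : ℝ) := by
              refine Finset.sum_le_sum fun g' _ => ?_
              exact_mod_cast Finset.card_image_le
      refine h2.trans ?_
      have h3 : ∀ g', ((D g').card : ℝ) ≤ Real.exp (g k) := by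
        intro g'
        rcases Nat.eq_zero_or_pos (D g').card with h0 | h1
        · simp [h0]; positivity
        · calc ((D g').card : ℝ) = Real.exp (Real.log ((D g').card : ℝ)) := by
                rw [Real.exp_log (by exact_mod_cast h1)]
            _ ≤ Real.exp (g k) := Real.exp_le_exp.mpr (hD2 g')
      calc ∑ g' ∈ C, ((D g').card : ℝ) ≤ ∑ _g' ∈ C, Real.exp (g k) :=
            Finset.sum_le_sum fun g' _ => h3 g'
        _ = (C.card : ℝ) * Real.exp (g k) := by
            rw [Finset.sum_const, nsmul_eq_mul]
    refine ⟨C', ?_, ?_, ?_⟩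
    · intro h hh
      simp only [hC', Finset.coe_biUnion, Set.mem_iUnion, Finset.coe_image,
        Set.mem_image, Finset.mem_coe] at hh
      obtain ⟨g', hg', f, hf, rfl⟩ := hh
      exact ⟨g', hCsub hg', f, hD1 g' hf, rfl⟩
    · rcases Nat.eq_zero_or_pos C'.card with h0 | h1
      · rw [h0]
        simp only [Nat.cast_zero, Real.log_zero]
        exact Finset.sum_nonneg fun i hi => hg i (Finset.mem_range.mp hi)
      · have hCpos : 0 < C.card := by
          by_contra hc
          have : C = ∅ := Finset.card_eq_zero.mp (Nat.eq_zero_of_not_pos hc)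
          simp [hC', this] at h1
        calc Real.log C'.card ≤ Real.log ((C.card : ℝ) * Real.exp (g k)) := by
              refine Real.log_le_log (by exact_mod_cast h1) hcard
          _ = Real.log C.card + g k := by
              rw [Real.log_mul (by positivity) (Real.exp_ne_zero _), Real.log_exp]
          _ ≤ (∑ i ∈ Finset.range k, g i) + g k := by linarith
          _ = ∑ i ∈ Finset.range (k + 1), g i := (Finset.sum_range_succ _ _).symm
    · intro h hh
      obtain ⟨gc, hgc, f, hf, rfl⟩ := hh
      obtain ⟨g', hg'C, hg'near⟩ := hCcov gc hgc
      obtain ⟨f', hf'D, hf'near⟩ := hD3 g' f hf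
      refine ⟨f' ∘ g', Finset.mem_biUnion.mpr ⟨g', hg'C,
        Finset.mem_image.mpr ⟨f', hf'D, rfl⟩⟩, ?_⟩
      have hlip : ‖f (gc x₀) - f (g' x₀)‖ ≤ (κ k : ℝ) * ‖gc x₀ - g' x₀‖ := by
        have := (hLip k f hf).dist_le_mul (gc x₀) (g' x₀)
        simpa [dist_eq_norm] using this
      have htri : ‖f (gc x₀) - f' (g' x₀)‖ ≤
          ‖f (gc x₀) - f (g' x₀)‖ + ‖f (g' x₀) - f' (g' x₀)‖ :=
        norm_sub_le_norm_sub_add_norm_sub _ _ _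
      have hE : (κ k : ℝ) * ‖gc x₀ - g' x₀‖ ≤
          (κ k : ℝ) * ∑ i ∈ Finset.range k, ε i * ∏ j ∈ Finset.Ico (i + 1) k, (κ j : ℝ) :=
        mul_le_mul_of_nonneg_left hg'near (κ k).coe_nonneg
      have hsum : ∑ i ∈ Finset.range (k + 1), ε i * ∏ j ∈ Finset.Ico (i + 1) (k + 1), (κ j : ℝ)
          = (κ k : ℝ) * (∑ i ∈ Finset.range k, ε i * ∏ j ∈ Finset.Ico (i + 1) k, (κ j : ℝ))
            + ε k := by
        rw [Finset.sum_range_succ]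
        congr 1
        · rw [Finset.mul_sum]
          refine Finset.sum_congr rfl fun i hi => ?_
          have hik : i + 1 ≤ k := Finset.mem_range.mp hi
          rw [Finset.prod_Ico_succ_top hik]
          ring
        · simp
      rw [hsum]
      calc ‖(f ∘ gc) x₀ - (f' ∘ g') x₀‖ = ‖f (gc x₀) - f' (g' x₀)‖ := rfl
        _ ≤ ‖f (gc x₀) - f (g' x₀)‖ + ‖f (g' x₀) - f' (g' x₀)‖ := htri
        _ ≤ (κ k : ℝ) * ‖gc x₀ - g' x₀‖ + ε k := add_le_add hlip hf'near
        _ ≤ _ := by linarith [hE]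
end
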